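/- If W ∈ SU(d) with ‖W − I‖ ≤ ε and ρ is a d-dimensional irreducible unitary representation of a finite group G, then ‖∑_{g∈G} ρ(g)(W − I)ρ(g)†‖ ≤ |G| · ((2^d + d!)/d) · ε². -/

import Mathlib

/-!
The twirl `∑_g ρ(g) M ρ(g)†` commutes with every `ρ(h)`, so by irreducibility it is a scalar,
and comparing traces shows the scalar is `|G| Tr M / d`. It remains to bound `Tr (W − I)`.
If `1 + ν_i` are the eigenvalues of `W`, then `|ν_i| ≤ ‖W − I‖ = ε` and
`∏ (1 + ν_i) = det W = 1`. Expanding the product, `∑ ν_i` is minus the sum of `∏_{i ∈ t} ν_i`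
over the at most `2^d` subsets `t` with `|t| ≥ 2`, each term of size at most `ε²` when `ε ≤ 1`;
for `ε > 1` the crude bound `d ε ≤ 2^d ε²` suffices.
-/

open Matrix
open scoped Matrix.Norms.L2Operator

open Finset

section Twirl

variable {G A : Type*} [Group G] [Fintype G] [Ring A] [StarRing A]

def twirl (ρ : G →* unitary A) (M : A) : A :=
  ∑ g, (ρ g : A) * M * star (ρ g : A)

theorem commute_twirl (ρ : G →* unitary A) (M : A) (h : G) :
    (ρ h : A) * twirl ρ M = twirl ρ M * ρ h := by
  calc (ρ h : A) * twirl ρ M = ∑ g, (ρ (h * g) : A) * M * star (ρ (h * g) : A) * ρ h := by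
        simp only [twirl, mul_sum, map_mul, Submonoid.coe_mul, star_mul, mul_assoc,
          Unitary.coe_star_mul_self, mul_one]
    _ = twirl ρ M * ρ h := by
        rw [twirl, sum_mul]
        exact Equiv.sum_comp (Equiv.mulLeft h) fun g => (ρ g : A) * M * star (ρ g : A) * ρ h

end Twirl

section MatrixTwirl

variable {G n : Type*} [Group G] [Fintype G] [Fintype n] [DecidableEq n]

theorem trace_twirl {R : Type*} [CommRing R] [StarRing R] (ρ : G →* unitary (Matrix n n R))
    (M : Matrix n n R) : (twirl ρ M).trace = Fintype.card G • M.trace := by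
  simp [twirl, trace_sum, trace_mul_cycle _ M]

theorem twirl_eq_smul_one {𝕜 : Type*} [Field 𝕜] [CharZero 𝕜] [StarRing 𝕜] [Nonempty n]
    (ρ : G →* unitary (Matrix n n 𝕜))
    (hirr : ∀ N : Matrix n n 𝕜, (∀ g, (ρ g : Matrix n n 𝕜) * N = N * ρ g) → ∃ c : 𝕜, N = c • 1)
    (M : Matrix n n 𝕜) :
    twirl ρ M = (Fintype.card G * M.trace / Fintype.card n) • 1 := by
  obtain ⟨c, hc⟩ := hirr _ (commute_twirl ρ M)
  have htrace := trace_twirl ρ M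
  rw [hc, trace_smul, trace_one, smul_eq_mul, nsmul_eq_mul] at htrace
  rw [hc, ← htrace, mul_div_cancel_right₀ _ (Nat.cast_ne_zero.mpr Fintype.card_ne_zero)]

end MatrixTwirl

theorem sum_powerset_filter_card_lt_two {ι M : Type*} [DecidableEq ι] [AddCommMonoid M]
    (s : Finset ι) (f : Finset ι → M) :
    ∑ t ∈ s.powerset with #t < 2, f t = f ∅ + ∑ i ∈ s, f {i} := by
  have hsplit : {t ∈ s.powerset | #t < 2} = insert ∅ (s.map ⟨singleton, singleton_injective⟩) := by
    ext t
    simp only [mem_filter, mem_powerset, mem_insert, mem_map, Function.Embedding.coeFn_mk]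
    constructor
    · rintro ⟨hts, ht⟩
      rcases Nat.lt_succ_iff_lt_or_eq.mp ht with h | h
      · exact Or.inl (card_eq_zero.mp (Nat.lt_one_iff.mp h))
      · obtain ⟨i, rfl⟩ := card_eq_one.mp h
        exact Or.inr ⟨i, singleton_subset_iff.mp hts, rfl⟩
    · rintro (rfl | ⟨i, hi, rfl⟩)
      · simp
      · simpa using hi
  rw [hsplit, sum_insert (by simp), sum_map]
  rfl

theorem sum_eq_neg_sum_powerset_of_prod_one_add_eq_one {ι R : Type*} [CommRing R]
    {s : Finset ι} {ν : ι → R} (hprod : ∏ i ∈ s, (1 + ν i) = 1) :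
    ∑ i ∈ s, ν i = -∑ t ∈ s.powerset with 2 ≤ #t, ∏ i ∈ t, ν i := by
  classical
  have h := prod_one_add (f := ν) s
  rw [hprod, ← sum_filter_not_add_sum_filter _ (2 ≤ #·)] at h
  simp only [not_le, sum_powerset_filter_card_lt_two, prod_empty, prod_singleton] at h
  linear_combination -h

theorem norm_sum_le_of_prod_one_add_eq_one {ι 𝕜 : Type*} [NormedField 𝕜] {s : Finset ι}
    {ν : ι → 𝕜} {ε : ℝ} (hprod : ∏ i ∈ s, (1 + ν i) = 1) (hε : 0 ≤ ε)
    (hν : ∀ i ∈ s, ‖ν i‖ ≤ ε) :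
    ‖∑ i ∈ s, ν i‖ ≤ 2 ^ #s * ε ^ 2 := by
  classical
  rcases le_or_gt ε 1 with hε1 | hε1
  · calc ‖∑ i ∈ s, ν i‖ = ‖∑ t ∈ s.powerset with 2 ≤ #t, ∏ i ∈ t, ν i‖ := by
          rw [sum_eq_neg_sum_powerset_of_prod_one_add_eq_one hprod, norm_neg]
      _ ≤ ∑ t ∈ s.powerset with 2 ≤ #t, ε ^ 2 := by
          refine (norm_sum_le _ _).trans (sum_le_sum fun t ht => ?_)
          rw [mem_filter, mem_powerset] at ht
          calc ‖∏ i ∈ t, ν i‖ ≤ ∏ _i ∈ t, ε := by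
                rw [norm_prod]
                exact prod_le_prod (fun _ _ => norm_nonneg _) fun i hi => hν i (ht.1 hi)
            _ = ε ^ #t := prod_const ε
            _ ≤ ε ^ 2 := pow_le_pow_of_le_one hε hε1 ht.2
      _ ≤ 2 ^ #s * ε ^ 2 := by
          have hcard : (#{t ∈ s.powerset | 2 ≤ #t} : ℝ) ≤ 2 ^ #s := by
            exact_mod_cast (card_filter_le _ _).trans (card_powerset s).le
          rw [sum_const, nsmul_eq_mul]
          gcongr
  · calc ‖∑ i ∈ s, ν i‖ ≤ #s * ε := (norm_sum_le_of_le s hν).trans_eq (by simp)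
      _ ≤ 2 ^ #s * ε := by
          gcongr
          exact_mod_cast Nat.lt_two_pow_self.le
      _ ≤ 2 ^ #s * ε ^ 2 := by
          gcongr
          exact le_self_pow₀ hε1.le two_ne_zero

section Eigenvalues

variable {n : Type*} [Fintype n] [DecidableEq n] [Nonempty n]

theorem norm_sub_one_le_of_mem_roots_charpoly {W : Matrix n n ℂ} {z : ℂ}
    (hz : z ∈ W.charpoly.roots) : ‖z - 1‖ ≤ ‖W - 1‖ := by
  have hspec : z ∈ spectrum ℂ W :=
    mem_spectrum_of_isRoot_charpoly ((Polynomial.mem_roots (charpoly_monic W).ne_zero).mp hz)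
  apply spectrum.norm_le_norm_of_mem
  rw [← map_one (algebraMap ℂ (Matrix n n ℂ)), ← spectrum.sub_singleton_eq]
  exact Set.sub_mem_sub hspec rfl

theorem norm_trace_sub_one_le_of_det_eq_one {W : Matrix n n ℂ} (hdet : W.det = 1) :
    ‖(W - 1).trace‖ ≤ 2 ^ Fintype.card n * ‖W - 1‖ ^ 2 := by
  set r := W.charpoly.roots
  have hcard : Fintype.card r = Fintype.card n := by
    rw [Multiset.card_coe, IsAlgClosed.card_roots_eq_natDegree, charpoly_natDegree_eq_dim]
  have hprod : ∏ z : r, (1 + ((z : ℂ) - 1)) = 1 := by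
    simpa [← Multiset.prod_eq_prod_coe, r, ← det_eq_prod_roots_charpoly]
  have htrace : (W - 1).trace = ∑ z : r, ((z : ℂ) - 1) := by
    rw [sum_sub_distrib, ← Multiset.sum_eq_sum_coe, ← trace_eq_sum_roots_charpoly, trace_sub,
      trace_one]
    simp [hcard]
  rw [htrace, ← hcard]
  exact norm_sum_le_of_prod_one_add_eq_one hprod (norm_nonneg _)
    fun z _ => norm_sub_one_le_of_mem_roots_charpoly (Multiset.coe_mem (x := z))

end Eigenvalues

/-- First-order term bound: if `W` is special unitary with `‖W − I‖ ≤ ε` and `ρ` is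
an irreducible unitary representation, then
`‖∑_g ρ(g)(W−I)ρ(g)†‖ ≤ |G|·((2^d + d!)/d)·ε²`. -/
theorem stmt_7 (d : ℕ) (hd : 0 < d) (G : Type*) [Group G] [Fintype G]
    (ρ : G →* Matrix.unitaryGroup (Fin d) ℂ)
    (hirr : ∀ N : Matrix (Fin d) (Fin d) ℂ,
      (∀ g : G, (ρ g : Matrix (Fin d) (Fin d) ℂ) * N = N * ρ g) → ∃ c : ℂ, N = c • 1)
    (W : Matrix (Fin d) (Fin d) ℂ) (hW : W ∈ Matrix.specialUnitaryGroup (Fin d) ℂ)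
    (ε : ℝ) (hε : ‖W - 1‖ ≤ ε) :
    ‖∑ g : G, (ρ g : Matrix (Fin d) (Fin d) ℂ) * (W - 1)
        * (ρ g : Matrix (Fin d) (Fin d) ℂ)ᴴ‖
      ≤ (Fintype.card G : ℝ) * (((2 : ℝ) ^ d + (d.factorial : ℝ)) / d) * ε ^ 2 := by
  have : Nonempty (Fin d) := ⟨⟨0, hd⟩⟩
  have htrace : ‖(W - 1).trace‖ ≤ ((2 : ℝ) ^ d + d.factorial) * ε ^ 2 :=
    calc ‖(W - 1).trace‖ ≤ 2 ^ d * ‖W - 1‖ ^ 2 := by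
          simpa using norm_trace_sub_one_le_of_det_eq_one (mem_specialUnitaryGroup_iff.mp hW).2
      _ ≤ ((2 : ℝ) ^ d + d.factorial) * ε ^ 2 := by
          gcongr
          exact le_add_of_nonneg_right (Nat.cast_nonneg _)
  change ‖twirl ρ (W - 1)‖ ≤ _
  rw [twirl_eq_smul_one ρ hirr, norm_smul, norm_one, mul_one, Fintype.card_fin]
  calc ‖(Fintype.card G * (W - 1).trace / d : ℂ)‖ = Fintype.card G * ‖(W - 1).trace‖ / d := by
        simp
    _ ≤ Fintype.card G * (((2 : ℝ) ^ d + d.factorial) * ε ^ 2) / d := by gcongr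
    _ = _ := by ring
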